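/- Let θ0, θt, θ1, θ∞, σ0t, σ1t be complex numbers, set pμ = 2cos(2πθμ), p0t = 2cos(2πσ0t), p1t = 2cos(2πσ1t), and let q be any complex number with q² = det G. Assume D ≠ 0 and define z± = (A ± q)/(2D). Then both z₊ and z₋ satisfy the equation ∏_{k=1}^{4}(1 − z·e^{2πiν_k}) = ∏_{k=1}^{4}(1 − z·e^{2πiλ_k}). -/

import Mathlib

open Complex Real

/-!
In the multiplicative variables `a = e^{2πiθ0}`, `b = e^{2πiθt}`, `c = e^{2πiθ1}`,
`d = e^{2πiθ∞}`, `s = e^{2πiσ0t}`, `t = e^{2πiσ1t}`, every quantity of the statement is a Laurent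
polynomial. The cubic and quartic terms of the two products agree, since `∑ νₖ = ∑ λₖ` and the
constant terms are both `1`, so their difference is `-z e^{2πiνΣ} (D z² - A z + D̃)`, where `D̃` is
`D` with every variable inverted. The discriminant `A² - 4 D D̃` of this quadratic is `det G`, so
`z±` are its two roots.
-/

section Algebra

variable {K : Type*} [Field K]

def gMatrix {R : Type*} [CommRing R] (p0 pt p1 pinf p0t p1t : R) : Matrix (Fin 4) (Fin 4) R :=
  !![2, -p0, -pt, p1t;
     -p0, 2, p0t, -pinf;
     -pt, p0t, 2, -p1;
     p1t, -pinf, -p1, 2]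

def coeffD (a b c d s t : K) : K :=
  (t * c * d - s * t) + (t * a * b - b * d) + (s * b * c - a * c)
    + (s * a * d - s * t * a * b * c * d)

def coeffA (a b c d s t : K) : K :=
  -((s - s⁻¹) * (t - t⁻¹)) - (b - b⁻¹) * (d - d⁻¹) - (a - a⁻¹) * (c - c⁻¹)

theorem det_gMatrix {R : Type*} [CommRing R] (p0 pt p1 pinf p0t p1t : R) :
    (gMatrix p0 pt p1 pinf p0t p1t).det =
      16 - 4 * (p0 ^ 2 + pt ^ 2 + p1 ^ 2 + pinf ^ 2 + p0t ^ 2 + p1t ^ 2)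
        + p0 ^ 2 * p1 ^ 2 + pt ^ 2 * pinf ^ 2 + p0t ^ 2 * p1t ^ 2
        + 4 * (p0 * pt * p0t + p1 * pinf * p0t + pt * p1 * p1t + p0 * pinf * p1t)
        - 2 * (p0 * p1 * p0t * p1t + pt * pinf * p0t * p1t + p0 * pt * p1 * pinf) := by
  rw [gMatrix, Matrix.det_succ_row_zero]
  simp [Fin.sum_univ_succ, Matrix.det_fin_three, Fin.succAbove]
  ring

variable {a b c d s t : K} (ha : a ≠ 0) (hb : b ≠ 0) (hc : c ≠ 0) (hd : d ≠ 0) (hs : s ≠ 0)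
  (ht : t ≠ 0)
include ha hb hc hd hs ht

theorem det_gMatrix_add_inv_eq_discrim :
    (gMatrix (a + a⁻¹) (b + b⁻¹) (c + c⁻¹) (d + d⁻¹) (s + s⁻¹) (t + t⁻¹)).det =
      discrim (coeffD a b c d s t) (-coeffA a b c d s t) (coeffD a⁻¹ b⁻¹ c⁻¹ d⁻¹ s⁻¹ t⁻¹) := by
  rw [det_gMatrix, discrim, coeffD, coeffD, coeffA]
  field_simp
  ring

theorem prod_sub_prod_eq_mul_quadratic (z : K) :
    (1 - z * (s * a * b)) * (1 - z * (s * c * d)) * (1 - z * (t * a * d)) * (1 - z * (t * b * c))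
      - (1 - z * (a * b * c * d)) * (1 - z * (s * t * a * c)) * (1 - z * (s * t * b * d)) * (1 - z)
      = -(z * (s * t * a * b * c * d)) *
          (coeffD a b c d s t * (z * z) + -coeffA a b c d s t * z
            + coeffD a⁻¹ b⁻¹ c⁻¹ d⁻¹ s⁻¹ t⁻¹) := by
  rw [coeffD, coeffD, coeffA]
  field_simp
  ring

theorem prod_eq_prod_of_eq_roots [NeZero (2 : K)] {q z : K}
    (hq : q ^ 2 = (gMatrix (a + a⁻¹) (b + b⁻¹) (c + c⁻¹) (d + d⁻¹) (s + s⁻¹) (t + t⁻¹)).det)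
    (hD : coeffD a b c d s t ≠ 0)
    (hz : z = (coeffA a b c d s t + q) / (2 * coeffD a b c d s t) ∨
      z = (coeffA a b c d s t - q) / (2 * coeffD a b c d s t)) :
    (1 - z * (s * a * b)) * (1 - z * (s * c * d)) * (1 - z * (t * a * d)) * (1 - z * (t * b * c))
      = (1 - z * (a * b * c * d)) * (1 - z * (s * t * a * c)) * (1 - z * (s * t * b * d))
          * (1 - z) := by
  have hdisc : discrim (coeffD a b c d s t) (-coeffA a b c d s t)
      (coeffD a⁻¹ b⁻¹ c⁻¹ d⁻¹ s⁻¹ t⁻¹) = q * q := by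
    rw [← det_gMatrix_add_inv_eq_discrim ha hb hc hd hs ht, ← hq, sq]
  have hroot := (quadratic_eq_zero_iff hD hdisc z).mpr (by rwa [neg_neg])
  linear_combination prod_sub_prod_eq_mul_quadratic ha hb hc hd hs ht z
    - z * (s * t * a * b * c * d) * hroot

end Algebra

theorem two_cos_two_pi_mul (x : ℂ) :
    2 * cos (2 * π * x) = cexp (2 * π * I * x) + (cexp (2 * π * I * x))⁻¹ := by
  rw [two_cos, neg_mul, Complex.exp_neg, show 2 * π * x * I = 2 * π * I * x by ring]

theorem four_sin_two_pi_mul_mul_sin_two_pi_mul (x y : ℂ) :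
    4 * sin (2 * π * x) * sin (2 * π * y) =
      -((cexp (2 * π * I * x) - (cexp (2 * π * I * x))⁻¹) *
        (cexp (2 * π * I * y) - (cexp (2 * π * I * y))⁻¹)) := by
  rw [show (4 : ℂ) * sin (2 * π * x) * sin (2 * π * y) =
    (2 * sin (2 * π * x)) * (2 * sin (2 * π * y)) by ring, two_sin, two_sin, neg_mul, neg_mul,
    Complex.exp_neg, Complex.exp_neg, show 2 * π * x * I = 2 * π * I * x by ring,
    show 2 * π * y * I = 2 * π * I * y by ring]
  linear_combination ((cexp (2 * π * I * x))⁻¹ - cexp (2 * π * I * x)) *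
    ((cexp (2 * π * I * y))⁻¹ - cexp (2 * π * I * y)) * I_sq

theorem zpm_are_roots
    (θ0 θt θ1 θinf σ0t σ1t : ℂ) (p0 pt p1 pinf p0t p1t : ℂ)
    (hp0 : p0 = 2 * Complex.cos (2 * (π : ℂ) * θ0))
    (hpt : pt = 2 * Complex.cos (2 * (π : ℂ) * θt))
    (hp1 : p1 = 2 * Complex.cos (2 * (π : ℂ) * θ1))
    (hpinf : pinf = 2 * Complex.cos (2 * (π : ℂ) * θinf))
    (hp0t : p0t = 2 * Complex.cos (2 * (π : ℂ) * σ0t))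
    (hp1t : p1t = 2 * Complex.cos (2 * (π : ℂ) * σ1t))
    (G : Matrix (Fin 4) (Fin 4) ℂ)
    (hG : G = !![2, -p0, -pt, p1t;
                 -p0, 2, p0t, -pinf;
                 -pt, p0t, 2, -p1;
                 p1t, -pinf, -p1, 2])
    (ν1 ν2 ν3 ν4 lam1 lam2 lam3 lam4 νS A D q : ℂ)
    (hν1 : ν1 = σ0t + θ0 + θt) (hν2 : ν2 = σ0t + θ1 + θinf)
    (hν3 : ν3 = σ1t + θ0 + θinf) (hν4 : ν4 = σ1t + θt + θ1)
    (hlam1 : lam1 = θ0 + θt + θ1 + θinf) (hlam2 : lam2 = σ0t + σ1t + θ0 + θ1)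
    (hlam3 : lam3 = σ0t + σ1t + θt + θinf) (hlam4 : lam4 = 0)
    (hνS : νS = (ν1 + ν2 + ν3 + ν4) / 2)
    (hA : A = 4 * Complex.sin (2 * (π : ℂ) * σ0t) * Complex.sin (2 * (π : ℂ) * σ1t)
            + 4 * Complex.sin (2 * (π : ℂ) * θt) * Complex.sin (2 * (π : ℂ) * θinf)
            + 4 * Complex.sin (2 * (π : ℂ) * θ0) * Complex.sin (2 * (π : ℂ) * θ1))
    (hD : D = (Complex.exp (2 * (π : ℂ) * I * (νS - ν1)) - Complex.exp (2 * (π : ℂ) * I * (νS - lam1)))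
            + (Complex.exp (2 * (π : ℂ) * I * (νS - ν2)) - Complex.exp (2 * (π : ℂ) * I * (νS - lam2)))
            + (Complex.exp (2 * (π : ℂ) * I * (νS - ν3)) - Complex.exp (2 * (π : ℂ) * I * (νS - lam3)))
            + (Complex.exp (2 * (π : ℂ) * I * (νS - ν4)) - Complex.exp (2 * (π : ℂ) * I * (νS - lam4))))
    (hq : q ^ 2 = G.det) (hDne : D ≠ 0) :
    ∀ z : ℂ, z = (A + q) / (2 * D) ∨ z = (A - q) / (2 * D) →
      (1 - z * Complex.exp (2 * (π : ℂ) * I * ν1)) *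
      (1 - z * Complex.exp (2 * (π : ℂ) * I * ν2)) *
      (1 - z * Complex.exp (2 * (π : ℂ) * I * ν3)) *
      (1 - z * Complex.exp (2 * (π : ℂ) * I * ν4)) =
      (1 - z * Complex.exp (2 * (π : ℂ) * I * lam1)) *
      (1 - z * Complex.exp (2 * (π : ℂ) * I * lam2)) *
      (1 - z * Complex.exp (2 * (π : ℂ) * I * lam3)) *
      (1 - z * Complex.exp (2 * (π : ℂ) * I * lam4)) := by
  intro z hz
  obtain ⟨e1, e2, e3, e4, f1, f2, f3, f4⟩ :
      νS - ν1 = σ1t + θ1 + θinf ∧ νS - ν2 = σ1t + θ0 + θt ∧ νS - ν3 = σ0t + θt + θ1 ∧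
      νS - ν4 = σ0t + θ0 + θinf ∧ νS - lam1 = σ0t + σ1t ∧ νS - lam2 = θt + θinf ∧
      νS - lam3 = θ0 + θ1 ∧ νS - lam4 = σ0t + σ1t + θ0 + θt + θ1 + θinf := by
    subst_vars
    refine ⟨?_, ?_, ?_, ?_, ?_, ?_, ?_, ?_⟩ <;> ring
  rw [e1, e2, e3, e4, f1, f2, f3, f4] at hD
  subst hν1 hν2 hν3 hν4 hlam1 hlam2 hlam3 hlam4
  simp only [mul_add, Complex.exp_add, mul_zero, Complex.exp_zero, mul_one] at hD ⊢
  simp only [four_sin_two_pi_mul_mul_sin_two_pi_mul, ← sub_eq_add_neg] at hA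
  rw [two_cos_two_pi_mul] at hp0 hpt hp1 hpinf hp0t hp1t
  subst hA hD hG hp0 hpt hp1 hpinf hp0t hp1t
  exact prod_eq_prod_of_eq_roots (Complex.exp_ne_zero _) (Complex.exp_ne_zero _)
    (Complex.exp_ne_zero _) (Complex.exp_ne_zero _) (Complex.exp_ne_zero _)
    (Complex.exp_ne_zero _) hq hDne hz
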